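/- arXiv:1412.2832 — 2 statements merged into one kernel-verified Lean document; each statement's English description precedes it below -/
import Mathlib

section
/- Let R be a reduced root system in ℝ^N with positive subsystem R₊, W-invariant multiplicity function κ with κ(α) > 0, and γ = Σ_{α∈R₊} κ(α). Assume Span(R) = ℝ^N and that W acts irreducibly on ℝ^N. Let β > 0, a ∈ ℝ, y ∈ ℝ^N, and define D(x,y) = exp(|x|²|y|²/(2γ))(1 + a⟪x,y⟫). Then for every x ∈ ℝ^N with ⟪α,x⟫ ≠ 0 for all α ∈ R₊ and every coordinate index i, the Dunkl operator in the x variable satisfies T_i[D(·,y)](x) = [ x_i (|y|²/γ)(1 + a⟪x,y⟫) + a(1 + βγ/N) y_i ] exp(|x|²|y|²/(2γ)). -/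
open scoped RealInnerProductSpace BigOperators
open MeasureTheory

noncomputable section

/-- Reflection of `x` along the vector `α`. -/
def sigmaRefl {N : ℕ} (α x : EuclideanSpace ℝ (Fin N)) : EuclideanSpace ℝ (Fin N) :=
  x - (2 * ⟪α, x⟫ / ⟪α, α⟫) • α

/-- A reduced root system in `ℝ^N`, together with a choice of positivity direction `m`. -/
structure DunklRootSystem (N : ℕ) where
  R : Finset (EuclideanSpace ℝ (Fin N))
  nonzero : ∀ α ∈ R, α ≠ 0
  invariant : ∀ α ∈ R, ∀ ξ ∈ R, sigmaRefl α ξ ∈ R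
  reduced : ∀ α ∈ R, ∀ ξ ∈ R, ∀ a : ℝ, ξ = a • α → a = 1 ∨ a = -1
  m : EuclideanSpace ℝ (Fin N)
  m_transverse : ∀ α ∈ R, ⟪α, m⟫ ≠ 0

/-- The positive subsystem `R₊`. -/
def DunklRootSystem.pos {N : ℕ} (S : DunklRootSystem N) : Finset (EuclideanSpace ℝ (Fin N)) :=
  S.R.filter fun α => 0 < ⟪α, S.m⟫

/-- The reflection group `W`, as a subgroup of the group of linear isometries of `ℝ^N`. -/
def DunklRootSystem.W {N : ℕ} (S : DunklRootSystem N) :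
    Subgroup (EuclideanSpace ℝ (Fin N) ≃ₗᵢ[ℝ] EuclideanSpace ℝ (Fin N)) :=
  Subgroup.closure { g | ∃ α ∈ S.R, ⇑g = sigmaRefl α }

/-- The Dunkl operator `T_i` (with renormalized multiplicities `κ` and coupling `β`). -/
def dunklT {N : ℕ} (S : DunklRootSystem N) (κ : EuclideanSpace ℝ (Fin N) → ℝ) (β : ℝ)
    (i : Fin N) (f : EuclideanSpace ℝ (Fin N) → ℝ) (x : EuclideanSpace ℝ (Fin N)) : ℝ :=
  fderiv ℝ f x (EuclideanSpace.single i 1) +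
    (β / 2) * ∑ α ∈ S.pos, α i * κ α * ((f x - f (sigmaRefl α x)) / ⟪α, x⟫)

/-!
A reflection `σ_α` preserves `|x|` and shifts `⟪x, y⟫` by `2⟪α, x⟫⟪α, y⟫ / |α|²`, so every
difference quotient in `T_i` equals `2a e^{|x|²|y|²/2γ} ⟪α, y⟫ / |α|²`, and the reflection part of
`T_i D` is `βa e^{|x|²|y|²/2γ}` times the `i`-th coordinate of `A y`, where
`A = ∑_{α ∈ R₊} κ(α) |α|⁻² α ⊗ α`. Summing over all of `R` instead gives `2A`, a symmetric operator
commuting with `W` because `W` permutes `R` and preserves `κ`. Each of its eigenspaces is therefore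
`W`-invariant, hence everything by irreducibility, so `A` is scalar and its trace `γ` forces
`A = (γ / N) • id`.
-/

section InnerProductSpace

variable {V : Type*} [NormedAddCommGroup V] [InnerProductSpace ℝ V]

def rootOperator (R : Finset V) (κ : V → ℝ) : V →ₗ[ℝ] V :=
  ∑ α ∈ R, (κ α / ⟪α, α⟫) • (innerₛₗ ℝ α).smulRight α

lemma rootOperator_apply (R : Finset V) (κ : V → ℝ) (v : V) :
    rootOperator R κ v = ∑ α ∈ R, (κ α / ⟪α, α⟫ * ⟪α, v⟫) • α := by
  simp [rootOperator, LinearMap.sum_apply, mul_smul]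

lemma isSymmetric_rootOperator (R : Finset V) (κ : V → ℝ) : (rootOperator R κ).IsSymmetric := by
  intro u v
  simp only [rootOperator_apply, sum_inner, inner_sum, real_inner_smul_left,
    real_inner_smul_right]
  exact Finset.sum_congr rfl fun α _ => by rw [real_inner_comm α u]; ring

lemma rootOperator_map (R : Finset V) (κ : V → ℝ) (g : V ≃ₗᵢ[ℝ] V)
    (hR : ∀ ξ, ξ ∈ R ↔ g ξ ∈ R) (hκ : ∀ ξ ∈ R, κ (g ξ) = κ ξ) (v : V) :
    rootOperator R κ (g v) = g (rootOperator R κ v) := by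
  rw [rootOperator_apply, rootOperator_apply, map_sum]
  refine (Finset.sum_equiv g.toEquiv hR fun ξ hξ => ?_).symm
  simp [hκ ξ hξ]

lemma trace_rootOperator [FiniteDimensional ℝ V] {R : Finset V} (hR : ∀ α ∈ R, α ≠ 0)
    (κ : V → ℝ) :
    LinearMap.trace ℝ V (rootOperator R κ) = ∑ α ∈ R, κ α := by
  simp only [rootOperator, map_sum, map_smul, LinearMap.trace_smulRight, innerₛₗ_apply_apply,
    smul_eq_mul]
  exact Finset.sum_congr rfl fun α hα => div_mul_cancel₀ _ (inner_self_ne_zero.2 (hR α hα))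

lemma map_comm_of_mem_closure {T : V →ₗ[ℝ] V} {s : Set (V ≃ₗᵢ[ℝ] V)}
    (hs : ∀ g ∈ s, ∀ v, T (g v) = g (T v))
    {g : V ≃ₗᵢ[ℝ] V} (hg : g ∈ Subgroup.closure s) (v : V) : T (g v) = g (T v) := by
  induction hg using Subgroup.closure_induction generalizing v with
  | mem g hg => exact hs g hg v
  | one => rfl
  | mul g h _ _ ihg ihh => simp only [LinearIsometryEquiv.coe_mul, Function.comp_apply, ihg, ihh]
  | inv g _ ih =>
    apply g.injective
    simp [← ih]

lemma fderiv_exp_norm_sq_mul_one_add_inner (c a : ℝ) (y x v : V) :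
    fderiv ℝ (fun z => Real.exp (‖z‖ ^ 2 * c) * (1 + a * ⟪z, y⟫)) x v
      = Real.exp (‖x‖ ^ 2 * c) * (2 * c * ⟪x, v⟫ * (1 + a * ⟪x, y⟫) + a * ⟪v, y⟫) := by
  have hexp : HasFDerivAt (fun z : V => Real.exp (‖z‖ ^ 2 * c)) _ x :=
    ((hasFDerivAt_id x).norm_sq.mul_const c).exp
  have hlin : HasFDerivAt (fun z : V => 1 + a * ⟪z, y⟫) _ x :=
    (((hasFDerivAt_id x).inner ℝ (hasFDerivAt_const y x)).const_mul a).const_add 1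
  rw [(hexp.fun_mul hlin).fderiv]
  simp only [id_eq, ContinuousLinearMap.comp_id, add_apply, smul_apply,
    ContinuousLinearMap.comp_apply, ContinuousLinearMap.prod_apply, ContinuousLinearMap.id_apply,
    zero_apply, fderivInnerCLM_apply,
    inner_zero_right, zero_add, smul_eq_mul, coe_innerSL_apply, nsmul_eq_mul, Nat.cast_ofNat]
  ring

end InnerProductSpace

namespace LinearMap.IsSymmetric

variable {V : Type*} [NormedAddCommGroup V] [InnerProductSpace ℝ V] [FiniteDimensional ℝ V]
  [Nontrivial V] {T : V →ₗ[ℝ] V}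

theorem exists_eq_smul_id_of_irreducible (hT : T.IsSymmetric) {G : Subgroup (V ≃ₗᵢ[ℝ] V)}
    (hcomm : ∀ g ∈ G, ∀ v, T (g v) = g (T v))
    (hirr : ∀ U : Submodule ℝ V, (∀ g ∈ G, ∀ u ∈ U, g u ∈ U) → U = ⊥ ∨ U = ⊤) :
    ∃ μ : ℝ, T = μ • LinearMap.id := by
  obtain ⟨μ, hμ⟩ : ∃ μ, Module.End.HasEigenvalue T μ :=
    ⟨_, hT.hasEigenvalue_iSup_of_finiteDimensional⟩
  have hinv : ∀ g ∈ G, ∀ u ∈ Module.End.eigenspace T μ, g u ∈ Module.End.eigenspace T μ := by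
    intro g hg u hu
    rw [Module.End.mem_eigenspace_iff] at hu ⊢
    rw [hcomm g hg, hu, map_smul]
  have htop : Module.End.eigenspace T μ = ⊤ := (hirr _ hinv).resolve_left hμ
  refine ⟨μ, LinearMap.ext fun v => ?_⟩
  exact Module.End.mem_eigenspace_iff.1 (htop ▸ Submodule.mem_top)

theorem eq_trace_div_finrank_smul_id_of_irreducible (hT : T.IsSymmetric)
    {G : Subgroup (V ≃ₗᵢ[ℝ] V)} (hcomm : ∀ g ∈ G, ∀ v, T (g v) = g (T v))
    (hirr : ∀ U : Submodule ℝ V, (∀ g ∈ G, ∀ u ∈ U, g u ∈ U) → U = ⊥ ∨ U = ⊤) :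
    T = (LinearMap.trace ℝ V T / Module.finrank ℝ V) • LinearMap.id := by
  obtain ⟨μ, rfl⟩ := hT.exists_eq_smul_id_of_irreducible hcomm hirr
  have : (Module.finrank ℝ V : ℝ) ≠ 0 := Nat.cast_ne_zero.2 Module.finrank_pos.ne'
  rw [map_smul, LinearMap.trace_id, smul_eq_mul, mul_div_cancel_right₀ _ this]

end LinearMap.IsSymmetric

section Dunkl

variable {N : ℕ}

lemma sigmaRefl_eq_reflection (α x : EuclideanSpace ℝ (Fin N)) :
    sigmaRefl α x = (ℝ ∙ α)ᗮ.reflection x := by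
  rw [Submodule.reflection_orthogonal_apply, Submodule.reflection_singleton_apply, sigmaRefl,
    real_inner_self_eq_norm_sq]
  module

lemma norm_sigmaRefl (α x : EuclideanSpace ℝ (Fin N)) : ‖sigmaRefl α x‖ = ‖x‖ := by
  rw [sigmaRefl_eq_reflection, LinearIsometryEquiv.norm_map]

lemma exp_mul_sub_sigmaRefl_div (c a : ℝ) (y x α : EuclideanSpace ℝ (Fin N))
    (hαx : ⟪α, x⟫ ≠ 0) :
    (Real.exp (‖x‖ ^ 2 * c) * (1 + a * ⟪x, y⟫)
        - Real.exp (‖sigmaRefl α x‖ ^ 2 * c) * (1 + a * ⟪sigmaRefl α x, y⟫)) / ⟪α, x⟫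
      = 2 * a * Real.exp (‖x‖ ^ 2 * c) * (⟪α, y⟫ / ⟪α, α⟫) := by
  have hαα : ⟪α, α⟫ ≠ 0 := inner_self_ne_zero.2 fun h => hαx (by simp [h])
  rw [norm_sigmaRefl, sigmaRefl, inner_sub_left, real_inner_smul_left]
  field_simp
  ring

namespace DunklRootSystem

variable (S : DunklRootSystem N)

lemma sigmaRefl_mem_R_iff {α : EuclideanSpace ℝ (Fin N)} (hα : α ∈ S.R)
    (ξ : EuclideanSpace ℝ (Fin N)) : ξ ∈ S.R ↔ sigmaRefl α ξ ∈ S.R := by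
  refine ⟨S.invariant α hα ξ, fun h => ?_⟩
  simpa only [sigmaRefl_eq_reflection, Submodule.reflection_reflection] using S.invariant α hα _ h

lemma neg_mem_R {α : EuclideanSpace ℝ (Fin N)} (hα : α ∈ S.R) : -α ∈ S.R := by
  simpa only [sigmaRefl_eq_reflection, Submodule.reflection_orthogonalComplement_singleton_eq_neg]
    using S.invariant α hα α hα

lemma sum_R_eq_sum_pos_add_sum_pos {M : Type*} [AddCommMonoid M]
    (F : EuclideanSpace ℝ (Fin N) → M) (hF : ∀ α ∈ S.R, F (-α) = F α) :
    ∑ α ∈ S.R, F α = ∑ α ∈ S.pos, F α + ∑ α ∈ S.pos, F α := by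
  rw [← Finset.sum_filter_add_sum_filter_not S.R (fun α => 0 < ⟪α, S.m⟫) F]
  congr 1
  refine Finset.sum_nbij' (fun α => -α) (fun α => -α) ?_ ?_ (fun α _ => neg_neg α)
    (fun α _ => neg_neg α) fun α hα => (hF α (Finset.mem_filter.1 hα).1).symm
  · intro α hα
    obtain ⟨hR, hm⟩ := Finset.mem_filter.1 hα
    refine Finset.mem_filter.2 ⟨S.neg_mem_R hR, ?_⟩
    rw [inner_neg_left, neg_pos]
    exact lt_of_le_of_ne (not_lt.1 hm) (S.m_transverse α hR)
  · intro α hα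
    obtain ⟨hR, hm⟩ := Finset.mem_filter.1 hα
    refine Finset.mem_filter.2 ⟨S.neg_mem_R hR, ?_⟩
    rw [inner_neg_left, not_lt, neg_nonpos]
    exact hm.le

variable (κ : EuclideanSpace ℝ (Fin N) → ℝ)

lemma rootOperator_R_map_of_mem_W (hκinv : ∀ α ∈ S.R, ∀ ξ ∈ S.R, κ (sigmaRefl α ξ) = κ ξ)
    {g : EuclideanSpace ℝ (Fin N) ≃ₗᵢ[ℝ] EuclideanSpace ℝ (Fin N)}
    (hg : g ∈ S.W) (v : EuclideanSpace ℝ (Fin N)) :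
    rootOperator S.R κ (g v) = g (rootOperator S.R κ v) := by
  refine map_comm_of_mem_closure (fun g hg v => ?_) hg v
  obtain ⟨α, hα, hgα⟩ := hg
  refine rootOperator_map _ _ g (fun ξ => ?_) (fun ξ hξ => ?_) v
  · rw [hgα]; exact S.sigmaRefl_mem_R_iff hα ξ
  · rw [hgα]; exact hκinv α hα ξ hξ

lemma kappa_neg (hκinv : ∀ α ∈ S.R, ∀ ξ ∈ S.R, κ (sigmaRefl α ξ) = κ ξ)
    {α : EuclideanSpace ℝ (Fin N)} (hα : α ∈ S.R) : κ (-α) = κ α := by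
  simpa only [sigmaRefl_eq_reflection,
    Submodule.reflection_orthogonalComplement_singleton_eq_neg] using hκinv α hα α hα

lemma rootOperator_R_eq_two_smul_pos (hκinv : ∀ α ∈ S.R, ∀ ξ ∈ S.R, κ (sigmaRefl α ξ) = κ ξ) :
    rootOperator S.R κ = (2 : ℝ) • rootOperator S.pos κ := by
  rw [rootOperator, S.sum_R_eq_sum_pos_add_sum_pos, ← two_smul ℝ, rootOperator]
  intro α hα
  ext v
  simp [S.kappa_neg κ hκinv hα]

lemma rootOperator_pos_eq_smul_id (hκinv : ∀ α ∈ S.R, ∀ ξ ∈ S.R, κ (sigmaRefl α ξ) = κ ξ)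
    (hN : 0 < N)
    (hirr : ∀ U : Submodule ℝ (EuclideanSpace ℝ (Fin N)),
      (∀ g ∈ S.W, ∀ u ∈ U, g u ∈ U) → U = ⊥ ∨ U = ⊤) :
    rootOperator S.pos κ = ((∑ α ∈ S.pos, κ α) / N) • LinearMap.id := by
  have : Nonempty (Fin N) := ⟨⟨0, hN⟩⟩
  have h := (isSymmetric_rootOperator S.R κ).eq_trace_div_finrank_smul_id_of_irreducible
    (fun g hg => S.rootOperator_R_map_of_mem_W κ hκinv hg) hirr
  rw [trace_rootOperator S.nonzero, finrank_euclideanSpace_fin,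
    S.sum_R_eq_sum_pos_add_sum_pos κ fun α hα => S.kappa_neg κ hκinv hα,
    S.rootOperator_R_eq_two_smul_pos κ hκinv] at h
  calc rootOperator S.pos κ = (2 : ℝ)⁻¹ • (2 : ℝ) • rootOperator S.pos κ := by
        rw [inv_smul_smul₀ two_ne_zero]
    _ = _ := by rw [h, smul_smul]; congr 1; ring

lemma sum_pos_coord_mul_inner_div (hκinv : ∀ α ∈ S.R, ∀ ξ ∈ S.R, κ (sigmaRefl α ξ) = κ ξ)
    (hirr : ∀ U : Submodule ℝ (EuclideanSpace ℝ (Fin N)),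
      (∀ g ∈ S.W, ∀ u ∈ U, g u ∈ U) → U = ⊥ ∨ U = ⊤)
    (y : EuclideanSpace ℝ (Fin N)) (i : Fin N) :
    ∑ α ∈ S.pos, α i * κ α * (⟪α, y⟫ / ⟪α, α⟫) = (∑ α ∈ S.pos, κ α) / N * y i := by
  have h := congrArg (· i)
    (LinearMap.congr_fun (S.rootOperator_pos_eq_smul_id κ hκinv i.pos hirr) y)
  simp only [rootOperator_apply, WithLp.ofLp_sum, Finset.sum_apply, PiLp.smul_apply,
    smul_eq_mul, LinearMap.smul_apply, LinearMap.id_apply] at h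
  rw [← h]
  exact Finset.sum_congr rfl fun α _ => by ring

end DunklRootSystem

end Dunkl

theorem statement9_general {N : ℕ} (S : DunklRootSystem N)
    (κ : EuclideanSpace ℝ (Fin N) → ℝ)
    (hκinv : ∀ α ∈ S.R, ∀ ξ ∈ S.R, κ (sigmaRefl α ξ) = κ ξ)
    (hirr : ∀ U : Submodule ℝ (EuclideanSpace ℝ (Fin N)),
      (∀ g ∈ S.W, ∀ u ∈ U, g u ∈ U) → U = ⊥ ∨ U = ⊤)
    (β : ℝ) (a : ℝ) (y : EuclideanSpace ℝ (Fin N))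
    (x : EuclideanSpace ℝ (Fin N)) (hx : ∀ α ∈ S.pos, ⟪α, x⟫ ≠ 0) (i : Fin N) :
    dunklT S κ β i
        (fun z => Real.exp (‖z‖ ^ 2 * ‖y‖ ^ 2 / (2 * ∑ α' ∈ S.pos, κ α')) * (1 + a * ⟪z, y⟫)) x
      = (x i * (‖y‖ ^ 2 / ∑ α' ∈ S.pos, κ α') * (1 + a * ⟪x, y⟫) +
            a * (1 + β * (∑ α' ∈ S.pos, κ α') / (N : ℝ)) * y i) *
          Real.exp (‖x‖ ^ 2 * ‖y‖ ^ 2 / (2 * ∑ α' ∈ S.pos, κ α')) := by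
  set γ := ∑ α' ∈ S.pos, κ α'
  set c := ‖y‖ ^ 2 / (2 * γ)
  have hkernel : (fun z => Real.exp (‖z‖ ^ 2 * ‖y‖ ^ 2 / (2 * γ)) * (1 + a * ⟪z, y⟫))
      = fun z => Real.exp (‖z‖ ^ 2 * c) * (1 + a * ⟪z, y⟫) := by
    simp_rw [c, mul_div_assoc]
  have hsum : ∑ α ∈ S.pos, α i * κ α * (2 * a * Real.exp (‖x‖ ^ 2 * c) * (⟪α, y⟫ / ⟪α, α⟫))
      = 2 * a * Real.exp (‖x‖ ^ 2 * c) * (γ / N * y i) := by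
    rw [← S.sum_pos_coord_mul_inner_div κ hκinv hirr y i, Finset.mul_sum]
    exact Finset.sum_congr rfl fun α _ => by ring
  rw [hkernel, dunklT, fderiv_exp_norm_sq_mul_one_add_inner,
    Finset.sum_congr rfl fun α hα => by rw [exp_mul_sub_sigmaRefl_div c a y x α (hx α hα)],
    hsum]
  simp only [EuclideanSpace.inner_single_right, EuclideanSpace.inner_single_left, conj_trivial, c,
    mul_div_assoc]
  ring

/-- For `D(x,y) = exp(|x|²|y|²/(2γ))(1 + a⟪x,y⟫)`, with `Span(R) = ℝ^N` and
`W` acting irreducibly, the Dunkl operator in `x` satisfies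
`T_i D = [x_i(|y|²/γ)(1 + a⟪x,y⟫) + a(1 + βγ/N) y_i] exp(|x|²|y|²/(2γ))` at regular points. -/
theorem statement9 {N : ℕ} (hN : 1 ≤ N) (S : DunklRootSystem N)
    (κ : EuclideanSpace ℝ (Fin N) → ℝ)
    (hκpos : ∀ α ∈ S.R, 0 < κ α)
    (hκinv : ∀ α ∈ S.R, ∀ ξ ∈ S.R, κ (sigmaRefl α ξ) = κ ξ)
    (hspan : Submodule.span ℝ (S.R : Set (EuclideanSpace ℝ (Fin N))) = ⊤)
    (hirr : ∀ U : Submodule ℝ (EuclideanSpace ℝ (Fin N)),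
      (∀ g ∈ S.W, ∀ u ∈ U, g u ∈ U) → U = ⊥ ∨ U = ⊤)
    (β : ℝ) (hβ : 0 < β) (a : ℝ) (y : EuclideanSpace ℝ (Fin N))
    (x : EuclideanSpace ℝ (Fin N)) (hx : ∀ α ∈ S.pos, ⟪α, x⟫ ≠ 0) (i : Fin N) :
    dunklT S κ β i
        (fun z => Real.exp (‖z‖ ^ 2 * ‖y‖ ^ 2 / (2 * ∑ α' ∈ S.pos, κ α')) * (1 + a * ⟪z, y⟫)) x
      = (x i * (‖y‖ ^ 2 / ∑ α' ∈ S.pos, κ α') * (1 + a * ⟪x, y⟫) +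
            a * (1 + β * (∑ α' ∈ S.pos, κ α') / (N : ℝ)) * y i) *
          Real.exp (‖x‖ ^ 2 * ‖y‖ ^ 2 / (2 * ∑ α' ∈ S.pos, κ α')) :=
  statement9_general S κ hκinv hirr β a y x hx i
end
end

section
/- Let R be a reduced root system in ℝ^N with positive subsystem R₊ and W-invariant multiplicity function κ with κ(α) > 0. If s ∈ ℝ^N satisfies ⟪α,s⟫ ≠ 0 for all α ∈ R₊ and s = Σ_{α∈R₊} (κ(α)/⟪α,s⟫) α, then for every ρ ∈ W the point ρs also satisfies ⟪α,ρs⟫ ≠ 0 for all α ∈ R₊ and ρs = Σ_{α∈R₊} (κ(α)/⟪α,ρs⟫) α. Hence the set of solutions of the peak-set equation is invariant under the action of W. -/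
open scoped RealInnerProductSpace BigOperators
open MeasureTheory

noncomputable section

lemma sigmaRefl_self {N : ℕ} (α : EuclideanSpace ℝ (Fin N)) (hα : α ≠ 0) :
    sigmaRefl α α = -α := by
  unfold sigmaRefl
  have h : ⟪α, α⟫ ≠ 0 := inner_self_ne_zero.mpr hα
  rw [mul_div_assoc, div_self h, mul_one]
  module

lemma negR {N : ℕ} (S : DunklRootSystem N) {α : EuclideanSpace ℝ (Fin N)} (hα : α ∈ S.R) :
    -α ∈ S.R := by
  have := S.invariant α hα α hα
  rwa [sigmaRefl_self α (S.nonzero α hα)] at this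

lemma kappa_neg {N : ℕ} (S : DunklRootSystem N) (κ : EuclideanSpace ℝ (Fin N) → ℝ)
    (hκinv : ∀ α ∈ S.R, ∀ ξ ∈ S.R, κ (sigmaRefl α ξ) = κ ξ)
    {α : EuclideanSpace ℝ (Fin N)} (hα : α ∈ S.R) : κ (-α) = κ α := by
  have := hκinv α hα α hα
  rwa [sigmaRefl_self α (S.nonzero α hα)] at this

/-- Half-sum lemma. -/
lemma halfsum {N : ℕ} (S : DunklRootSystem N) (κ : EuclideanSpace ℝ (Fin N) → ℝ)
    (hκneg : ∀ α ∈ S.R, κ (-α) = κ α) (x : EuclideanSpace ℝ (Fin N))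
    (hx : ∀ α ∈ S.R, ⟪α, x⟫ ≠ 0) :
    ∑ α ∈ S.pos, (κ α / ⟪α, x⟫) • α = (1/2 : ℝ) • ∑ α ∈ S.R, (κ α / ⟪α, x⟫) • α := by
  have hsplit := Finset.sum_filter_add_sum_filter_not S.R
    (fun α => 0 < ⟪α, S.m⟫) (fun α => (κ α / ⟪α, x⟫) • α)
  have hneg : ∑ α ∈ S.R.filter (fun α => ¬ 0 < ⟪α, S.m⟫), (κ α / ⟪α, x⟫) • α
      = ∑ α ∈ S.pos, (κ α / ⟪α, x⟫) • α := by
    refine Finset.sum_nbij' (fun α => -α) (fun α => -α) ?_ ?_ ?_ ?_ ?_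
    · intro α hα
      simp only [Finset.mem_filter] at hα
      refine Finset.mem_filter.mpr ⟨negR S hα.1, ?_⟩
      have hne := S.m_transverse α hα.1
      have : ⟪α, S.m⟫ < 0 := lt_of_le_of_ne (not_lt.mp hα.2) hne
      rw [inner_neg_left]; linarith
    · intro α hα
      simp only [DunklRootSystem.pos, Finset.mem_filter] at hα
      refine Finset.mem_filter.mpr ⟨negR S hα.1, ?_⟩
      rw [inner_neg_left]; simp only [not_lt]; linarith [hα.2]
    · intro α _; simp
    · intro α _; simp
    · intro α hα
      simp only [Finset.mem_filter] at hα
      rw [hκneg α hα.1, inner_neg_left]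
      rw [div_neg, neg_smul, smul_neg, neg_neg]
  rw [← hsplit, hneg]
  have hp : S.R.filter (fun α => 0 < ⟪α, S.m⟫) = S.pos := rfl
  rw [hp, ← two_smul ℝ]
  rw [smul_smul]
  norm_num

/-- Invariance property for elements of W. -/
lemma W_perm {N : ℕ} (S : DunklRootSystem N) (κ : EuclideanSpace ℝ (Fin N) → ℝ)
    (hκinv : ∀ α ∈ S.R, ∀ ξ ∈ S.R, κ (sigmaRefl α ξ) = κ ξ)
    (ρ : EuclideanSpace ℝ (Fin N) ≃ₗᵢ[ℝ] EuclideanSpace ℝ (Fin N))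
    (hρ : ρ ∈ Subgroup.closure { g : EuclideanSpace ℝ (Fin N) ≃ₗᵢ[ℝ] EuclideanSpace ℝ (Fin N) |
      ∃ α ∈ S.R, ⇑g = sigmaRefl α }) :
    ∀ α ∈ S.R, ρ α ∈ S.R ∧ κ (ρ α) = κ α := by
  induction hρ using Subgroup.closure_induction with
  | mem g hg =>
      obtain ⟨β, hβ, hgβ⟩ := hg
      intro α hα
      have h1 : g α = sigmaRefl β α := by rw [hgβ]
      exact ⟨h1 ▸ S.invariant β hβ α hα, h1 ▸ hκinv β hβ α hα⟩
  | one => intro α hα; simp [hα]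
  | mul g h _ _ hg hh =>
      intro α hα
      obtain ⟨h1, h2⟩ := hh α hα
      obtain ⟨h3, h4⟩ := hg _ h1
      exact ⟨h3, by simp only [LinearIsometryEquiv.coe_mul, Function.comp_apply] at *; rw [h4, h2]⟩
  | inv g _ hg =>
      classical
      -- g maps R into R injectively, hence bijectively; so g⁻¹ maps R into R
      have himg : S.R.image (fun α => g α) = S.R := by
        apply Finset.eq_of_subset_of_card_le
        · intro β hβ
          obtain ⟨α, hα, rfl⟩ := Finset.mem_image.mp hβ
          exact (hg α hα).1
        · rw [Finset.card_image_of_injective _ g.injective]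
      intro α hα
      have hmem : α ∈ S.R.image (fun α => g α) := by rw [himg]; exact hα
      obtain ⟨β, hβ, hβα⟩ := Finset.mem_image.mp hmem
      have hginv : g⁻¹ α = β := by rw [← hβα]; simp
      rw [hginv]
      exact ⟨hβ, by rw [← (hg β hβ).2, hβα]⟩


theorem statement12' {N : ℕ} (hN : 1 ≤ N) (S : DunklRootSystem N)
    (κ : EuclideanSpace ℝ (Fin N) → ℝ)
    (hκpos : ∀ α ∈ S.R, 0 < κ α)
    (hκinv : ∀ α ∈ S.R, ∀ ξ ∈ S.R, κ (sigmaRefl α ξ) = κ ξ)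
    (s : EuclideanSpace ℝ (Fin N)) (hs : ∀ α ∈ S.pos, ⟪α, s⟫ ≠ 0)
    (heq : s = ∑ α ∈ S.pos, (κ α / ⟪α, s⟫) • α)
    (ρ : EuclideanSpace ℝ (Fin N) ≃ₗᵢ[ℝ] EuclideanSpace ℝ (Fin N))
    (hρ : ρ ∈ Subgroup.closure { g : EuclideanSpace ℝ (Fin N) ≃ₗᵢ[ℝ] EuclideanSpace ℝ (Fin N) |
      ∃ α ∈ S.R, ⇑g = sigmaRefl α }) :
    (∀ α ∈ S.pos, ⟪α, ρ s⟫ ≠ 0) ∧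
      ρ s = ∑ α ∈ S.pos, (κ α / ⟪α, ρ s⟫) • α := by
  have hκneg : ∀ α ∈ S.R, κ (-α) = κ α := fun α hα => kappa_neg S κ hκinv hα
  have hperm := W_perm S κ hκinv ρ hρ
  have hpermInv := W_perm S κ hκinv ρ⁻¹ (inv_mem hρ)
  have hsymm : ∀ β ∈ S.R, ρ.symm β ∈ S.R ∧ κ (ρ.symm β) = κ β := by
    intro β hβ
    have h := hpermInv β hβ
    simpa using h
  -- ⟪α, s⟫ ≠ 0 on all of R
  have hsR : ∀ α ∈ S.R, ⟪α, s⟫ ≠ 0 := by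
    intro α hα
    by_cases h : 0 < ⟪α, S.m⟫
    · exact hs α (Finset.mem_filter.mpr ⟨hα, h⟩)
    · have hpos : -α ∈ S.pos := by
        refine Finset.mem_filter.mpr ⟨negR S hα, ?_⟩
        have hne := S.m_transverse α hα
        rw [inner_neg_left]
        have : ⟪α, S.m⟫ < 0 := lt_of_le_of_ne (not_lt.mp h) hne
        linarith
      have := hs _ hpos
      rw [inner_neg_left] at this
      exact fun hc => this (by rw [hc, neg_zero])
  -- ⟪α, ρ s⟫ ≠ 0 on all of R
  have hρsR : ∀ α ∈ S.R, ⟪α, ρ s⟫ ≠ 0 := by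
    intro α hα
    have h1 : ⟪α, ρ s⟫ = ⟪ρ.symm α, s⟫ := by
      conv_lhs => rw [← ρ.apply_symm_apply α, ρ.inner_map_map]
    rw [h1]
    exact hsR _ (hsymm α hα).1
  refine ⟨fun α hα => hρsR α (Finset.mem_filter.mp hα).1, ?_⟩
  have h1 : s = (1/2 : ℝ) • ∑ α ∈ S.R, (κ α / ⟪α, s⟫) • α :=
    heq.trans (halfsum S κ hκneg s hsR)
  have h2 : ρ s = (1/2 : ℝ) • ∑ α ∈ S.R, (κ α / ⟪α, s⟫) • ρ α := by
    conv_lhs => rw [h1]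
    simp only [_root_.map_smul, map_sum]
  have h3 : ∑ α ∈ S.R, (κ α / ⟪α, s⟫) • ρ α = ∑ β ∈ S.R, (κ β / ⟪β, ρ s⟫) • β := by
    refine Finset.sum_nbij' (fun α => ρ α) (fun β => ρ.symm β) ?_ ?_ ?_ ?_ ?_
    · intro α hα; exact (hperm α hα).1
    · intro β hβ; exact (hsymm β hβ).1
    · intro α _; simp
    · intro β _; simp
    · intro α hα
      rw [(hperm α hα).2, ρ.inner_map_map]
  calc ρ s = (1/2 : ℝ) • ∑ α ∈ S.R, (κ α / ⟪α, s⟫) • ρ α := h2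
    _ = (1/2 : ℝ) • ∑ β ∈ S.R, (κ β / ⟪β, ρ s⟫) • β := by rw [h3]
    _ = ∑ α ∈ S.pos, (κ α / ⟪α, ρ s⟫) • α := (halfsum S κ hκneg (ρ s) hρsR).symm

/-- The peak set of `R` is `W`-invariant: if `s` solves the peak-set equation
then so does `ρs` for every `ρ ∈ W`. -/
theorem statement12 {N : ℕ} (hN : 1 ≤ N) (S : DunklRootSystem N)
    (κ : EuclideanSpace ℝ (Fin N) → ℝ)
    (hκpos : ∀ α ∈ S.R, 0 < κ α)
    (hκinv : ∀ α ∈ S.R, ∀ ξ ∈ S.R, κ (sigmaRefl α ξ) = κ ξ)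
    (s : EuclideanSpace ℝ (Fin N)) (hs : ∀ α ∈ S.pos, ⟪α, s⟫ ≠ 0)
    (heq : s = ∑ α ∈ S.pos, (κ α / ⟪α, s⟫) • α)
    (ρ : EuclideanSpace ℝ (Fin N) ≃ₗᵢ[ℝ] EuclideanSpace ℝ (Fin N)) (hρ : ρ ∈ S.W) :
    (∀ α ∈ S.pos, ⟪α, ρ s⟫ ≠ 0) ∧
      ρ s = ∑ α ∈ S.pos, (κ α / ⟪α, ρ s⟫) • α :=
  statement12' hN S κ hκpos hκinv s hs heq ρ hρ
end
end
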